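/- arXiv:1702.00704 — 2 statements merged into one kernel-verified Lean document; each statement's English description precedes it below -/
import Mathlib

section
/- Let Ω ⊆ ℂ be open, let h : Ω → ℂ be holomorphic and nowhere vanishing (so that θ = h(x)dx is a nowhere vanishing holomorphic 1-form on Ω), let n ≥ 1, and let f = (x₁, x₂, …, xₙ, y₁, …, yₙ, z) : 𝔻 → Ω × ℂ^{2n} be holomorphic on the open unit disc 𝔻 ⊂ ℂ. Define g : 𝔻 → ℂ by g(ζ) = z′(ζ) − y₁(ζ)·h(x₁(ζ))·x₁′(ζ) − Σ_{i=2}^{n} yᵢ(ζ)·xᵢ′(ζ) (so that f*α = g(ζ)dζ for the contact form α = dz − y₁θ(x₁) − Σ_{i=2}^{n} yᵢ dxᵢ), and set z̃(ζ) = z(ζ) − ∫₀¹ g(tζ)·ζ dt (the integral of f*α along the segment from 0 to ζ). Then: (1) z̃ is holomorphic on 𝔻; (2) the map f̃ = (x₁, …, xₙ, y₁, …, yₙ, z̃) is α-Legendrian, i.e. z̃′(ζ) = y₁(ζ)·h(x₁(ζ))·x₁′(ζ) + Σ_{i=2}^{n} yᵢ(ζ)·xᵢ′(ζ) for all ζ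 ∈ 𝔻; and (3) sup_{ζ∈𝔻} |z̃(ζ) − z(ζ)| ≤ sup_{ζ∈𝔻} |∫₀¹ g(tζ)·ζ dt|. -/
/-!
On the disc, the holomorphic coefficient `g` of `f*α = g dζ` has a primitive `G`. The
fundamental theorem of calculus along the segment `[0, ζ]` gives `∫₀¹ g(tζ) ζ dt = G ζ - G 0`,
so `z̃ = z - G + G 0` near each point and `z̃' = z' - g`, which is the Legendrian condition.
-/

open Metric

lemma integral_comp_mul_mul_eq_sub_of_hasDerivAt {U : Set ℂ} (hU : StarConvex ℝ 0 U)
    {F g : ℂ → ℂ} (hF : ∀ w ∈ U, HasDerivAt F (g w) w) (hg : ContinuousOn g U)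
    {ζ : ℂ} (hζ : ζ ∈ U) :
    ∫ t in (0:ℝ)..1, g ((t : ℂ) * ζ) * ζ = F ζ - F 0 := by
  have hseg : ∀ t ∈ Set.uIcc (0:ℝ) 1, (t : ℂ) * ζ ∈ U := by
    intro t ht
    rw [Set.uIcc_of_le zero_le_one] at ht
    simpa only [Complex.real_smul] using hU.smul_mem hζ ht.1 ht.2
  have hderiv : ∀ t ∈ Set.uIcc (0:ℝ) 1,
      HasDerivAt (fun s : ℝ => F ((s : ℂ) * ζ)) (g ((t : ℂ) * ζ) * ζ) t :=
    fun t ht => ((hF _ (hseg t ht)).comp (t : ℂ) (hasDerivAt_mul_const ζ)).comp_ofReal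
  have hint : IntervalIntegrable (fun t : ℝ => g ((t : ℂ) * ζ) * ζ) MeasureTheory.volume 0 1 :=
    ContinuousOn.intervalIntegrable <| (hg.comp (by fun_prop) hseg).mul continuousOn_const
  simpa using intervalIntegral.integral_eq_sub_of_hasDerivAt hderiv hint

lemma hasDerivAt_integral_comp_mul_mul {r : ℝ} {g : ℂ → ℂ}
    (hg : DifferentiableOn ℂ g (ball 0 r)) {ζ : ℂ} (hζ : ζ ∈ ball (0:ℂ) r) :
    HasDerivAt (fun w => ∫ t in (0:ℝ)..1, g ((t : ℂ) * w) * w) (g ζ) ζ := by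
  obtain ⟨G, hG⟩ := hg.isExactOn_ball
  have heq : (fun w => G w - G 0) =ᶠ[nhds ζ] fun w => ∫ t in (0:ℝ)..1, g ((t : ℂ) * w) * w :=
    Filter.eventually_of_mem (isOpen_ball.mem_nhds hζ) fun w hw =>
      (integral_comp_mul_mul_eq_sub_of_hasDerivAt ((convex_ball 0 r).starConvex
        (mem_ball_self (pos_of_mem_ball hζ))) hG hg.continuousOn hw).symm
  exact ((hG ζ hζ).sub_const (G 0)).congr_of_eventuallyEq heq.symm

theorem stmt_1_general
    (Ω : Set ℂ) (h : ℂ → ℂ)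
    (hh : DifferentiableOn ℂ h Ω)
    (m : ℕ)  -- the number of coordinate pairs is `n = m + 1 ≥ 1`
    (x y : Fin (m + 1) → ℂ → ℂ) (z : ℂ → ℂ)
    (hx : ∀ i, ∀ ζ ∈ Metric.ball (0:ℂ) 1, DifferentiableAt ℂ (x i) ζ)
    (hy : ∀ i, ∀ ζ ∈ Metric.ball (0:ℂ) 1, DifferentiableAt ℂ (y i) ζ)
    (hz : ∀ ζ ∈ Metric.ball (0:ℂ) 1, DifferentiableAt ℂ z ζ)
    (hx1 : ∀ ζ ∈ Metric.ball (0:ℂ) 1, x 0 ζ ∈ Ω)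
    (g : ℂ → ℂ)
    (hg : ∀ ζ ∈ Metric.ball (0:ℂ) 1,
      g ζ = deriv z ζ - y 0 ζ * h (x 0 ζ) * deriv (x 0) ζ
        - ∑ i ∈ Finset.univ.erase (0 : Fin (m + 1)), y i ζ * deriv (x i) ζ)
    (ztil : ℂ → ℂ)
    (hztil : ∀ ζ, ztil ζ = z ζ - ∫ t in (0:ℝ)..1, g ((t : ℂ) * ζ) * ζ) :
    -- (1) `z̃` is holomorphic on `𝔻`
    (∀ ζ ∈ Metric.ball (0:ℂ) 1, DifferentiableAt ℂ ztil ζ) ∧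
    -- (2) `f̃ = (x, y, z̃)` is α-Legendrian
    (∀ ζ ∈ Metric.ball (0:ℂ) 1,
      deriv ztil ζ = y 0 ζ * h (x 0 ζ) * deriv (x 0) ζ
        + ∑ i ∈ Finset.univ.erase (0 : Fin (m + 1)), y i ζ * deriv (x i) ζ) ∧
    -- (3) `sup_{𝔻} |z̃ − z| ≤ sup_{𝔻} |∫₀^ζ f*α|`
    (∀ C : ℝ,
      (∀ ζ ∈ Metric.ball (0:ℂ) 1, ‖∫ t in (0:ℝ)..1, g ((t : ℂ) * ζ) * ζ‖ ≤ C) →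
      ∀ ζ ∈ Metric.ball (0:ℂ) 1, ‖ztil ζ - z ζ‖ ≤ C) := by
  have hxD (i) : DifferentiableOn ℂ (x i) (ball 0 1) := fun ζ hζ =>
    (hx i ζ hζ).differentiableWithinAt
  have hyD (i) : DifferentiableOn ℂ (y i) (ball 0 1) := fun ζ hζ =>
    (hy i ζ hζ).differentiableWithinAt
  have hzD : DifferentiableOn ℂ z (ball 0 1) := fun ζ hζ => (hz ζ hζ).differentiableWithinAt
  have hxD' (i) := (hxD i).deriv isOpen_ball
  have hzD' := hzD.deriv isOpen_ball
  have hgD : DifferentiableOn ℂ g (ball 0 1) := by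
    refine DifferentiableOn.congr ?_ hg
    fun_prop (disch := exact hx1)
  have hztil' : ∀ ζ ∈ ball (0:ℂ) 1, HasDerivAt ztil (deriv z ζ - g ζ) ζ := fun ζ hζ => by
    rw [funext hztil]
    exact (hz ζ hζ).hasDerivAt.sub (hasDerivAt_integral_comp_mul_mul hgD hζ)
  refine ⟨fun ζ hζ => (hztil' ζ hζ).differentiableAt, fun ζ hζ => ?_, fun C hC ζ hζ => ?_⟩
  · rw [(hztil' ζ hζ).deriv, hg ζ hζ]
    ring
  · simpa [hztil] using hC ζ hζ

/-- **Lemma 3.1 (correction of the `z`-component to a Legendrian disc).**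
On `Ω × ℂ^{2n}` (with `n = m + 1 ≥ 1`) with contact form
`α = dz − y₁ h(x₁) dx₁ − Σ_{i=2}^n yᵢ dxᵢ`
(`θ = h(x) dx` a nowhere vanishing holomorphic 1-form on the open set `Ω ⊆ ℂ`),
given a holomorphic map `f = (x₁,…,xₙ,y₁,…,yₙ,z)` on the unit disc `𝔻`, the function
`z̃(ζ) = z(ζ) − ∫₀^ζ f*α` (integral along the segment from `0` to `ζ`) is holomorphic,
the map `f̃ = (x,y,z̃)` is α-Legendrian, and `sup_𝔻 |z̃ − z| ≤ sup_𝔻 |∫₀^ζ f*α|`. -/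
theorem stmt_1
    (Ω : Set ℂ) (hΩ : IsOpen Ω) (h : ℂ → ℂ)
    (hh : DifferentiableOn ℂ h Ω) (hh0 : ∀ w ∈ Ω, h w ≠ 0)
    (m : ℕ)  -- the number of coordinate pairs is `n = m + 1 ≥ 1`
    (x y : Fin (m + 1) → ℂ → ℂ) (z : ℂ → ℂ)
    (hx : ∀ i, ∀ ζ ∈ Metric.ball (0:ℂ) 1, DifferentiableAt ℂ (x i) ζ)
    (hy : ∀ i, ∀ ζ ∈ Metric.ball (0:ℂ) 1, DifferentiableAt ℂ (y i) ζ)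
    (hz : ∀ ζ ∈ Metric.ball (0:ℂ) 1, DifferentiableAt ℂ z ζ)
    (hx1 : ∀ ζ ∈ Metric.ball (0:ℂ) 1, x 0 ζ ∈ Ω)
    (g : ℂ → ℂ)
    (hg : ∀ ζ ∈ Metric.ball (0:ℂ) 1,
      g ζ = deriv z ζ - y 0 ζ * h (x 0 ζ) * deriv (x 0) ζ
        - ∑ i ∈ Finset.univ.erase (0 : Fin (m + 1)), y i ζ * deriv (x i) ζ)
    (ztil : ℂ → ℂ)
    (hztil : ∀ ζ, ztil ζ = z ζ - ∫ t in (0:ℝ)..1, g ((t : ℂ) * ζ) * ζ) :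
    -- (1) `z̃` is holomorphic on `𝔻`
    (∀ ζ ∈ Metric.ball (0:ℂ) 1, DifferentiableAt ℂ ztil ζ) ∧
    -- (2) `f̃ = (x, y, z̃)` is α-Legendrian
    (∀ ζ ∈ Metric.ball (0:ℂ) 1,
      deriv ztil ζ = y 0 ζ * h (x 0 ζ) * deriv (x 0) ζ
        + ∑ i ∈ Finset.univ.erase (0 : Fin (m + 1)), y i ζ * deriv (x i) ζ) ∧
    -- (3) `sup_{𝔻} |z̃ − z| ≤ sup_{𝔻} |∫₀^ζ f*α|`
    (∀ C : ℝ,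
      (∀ ζ ∈ Metric.ball (0:ℂ) 1, ‖∫ t in (0:ℝ)..1, g ((t : ℂ) * ζ) * ζ‖ ≤ C) →
      ∀ ζ ∈ Metric.ball (0:ℂ) 1, ‖ztil ζ - z ζ‖ ≤ C) :=
  stmt_1_general Ω h hh m x y z hx hy hz hx1 g hg ztil hztil
end

section
/- Let V be a finite-dimensional complex vector space with dim_ℂ V = 2n and let ω be a nondegenerate alternating ℂ-bilinear form on V. If U is an isotropic real subspace of V with dim_ℝ U = 2n (i.e. U is Lagrangian), then U = Span_ℂ(U) = U^⊥; in particular, U is a complex linear subspace of V (closed under multiplication by i). -/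
/-!
Let `W = Span_ℂ(U)`. Since `ω` is ℂ-bilinear, isotropy of `U` passes to `W`, so `W ⊆ W^⊥`, and
nondegeneracy gives `dim_ℂ W + dim_ℂ W^⊥ = 2n`, hence `dim_ℂ W ≤ n`. On the other hand
`2n = dim_ℝ U ≤ dim_ℝ W = 2 dim_ℂ W`. So all these inequalities are equalities: `U = W` as real
subspaces and `W = W^⊥`.
-/

/-- The ω-orthogonal complement `U^⊥ = {v : V | ∀ u ∈ U, ω u v = 0}` of a set `U ⊆ V`
with respect to a ℂ-bilinear form `ω`, as a complex linear subspace of `V`. -/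
def omegaPerp {V : Type*} [AddCommGroup V] [Module ℂ V]
    (ω : V →ₗ[ℂ] V →ₗ[ℂ] ℂ) (U : Set V) : Submodule ℂ V where
  carrier := {v : V | ∀ u ∈ U, ω u v = 0}
  add_mem' := by
    intro a b ha hb u hu
    simp [map_add, ha u hu, hb u hu]
  zero_mem' := by
    intro u hu
    simp
  smul_mem' := by
    intro c a ha u hu
    simp [ha u hu]

open Module Submodule

section OmegaPerp

variable {V : Type*} [AddCommGroup V] [Module ℂ V] (ω : V →ₗ[ℂ] V →ₗ[ℂ] ℂ)

theorem omegaPerp_span (s : Set V) : omegaPerp ω (span ℂ s) = omegaPerp ω s := by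
  refine le_antisymm (fun v hv u hu => hv u (subset_span hu)) fun v hv u hu => ?_
  have hspan : span ℂ s ≤ LinearMap.ker (ω.flip v) :=
    span_le.mpr fun x hx => by simpa using hv x hx
  simpa using hspan hu

theorem span_le_omegaPerp_span_of_isotropic {s : Set V}
    (hiso : ∀ u ∈ s, ∀ u' ∈ s, ω u u' = 0) : span ℂ s ≤ omegaPerp ω (span ℂ s) := by
  rw [omegaPerp_span, span_le]
  exact fun v hv u hu => hiso u hu v hv

variable [FiniteDimensional ℂ V] {ω}

-- `omegaPerp ω W` is definitionally Mathlib's `LinearMap.BilinForm.orthogonal ω W`.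
theorem finrank_omegaPerp (hω : ω.Nondegenerate) (W : Submodule ℂ V) :
    finrank ℂ (omegaPerp ω W) = finrank ℂ V - finrank ℂ W :=
  LinearMap.BilinForm.finrank_orthogonal hω W

theorem two_mul_finrank_le_of_le_omegaPerp (hω : ω.Nondegenerate) {W : Submodule ℂ V}
    (hW : W ≤ omegaPerp ω W) : 2 * finrank ℂ W ≤ finrank ℂ V := by
  have := finrank_mono hW
  rw [finrank_omegaPerp hω] at this
  have := W.finrank_le
  omega

theorem eq_omegaPerp_of_le_of_finrank_le (hω : ω.Nondegenerate) {W : Submodule ℂ V}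
    (hW : W ≤ omegaPerp ω W) (hdim : finrank ℂ V ≤ 2 * finrank ℂ W) : W = omegaPerp ω W := by
  refine eq_of_le_of_finrank_le hW ?_
  rw [finrank_omegaPerp hω]
  omega

end OmegaPerp

section RealSubspace

variable {V : Type*} [AddCommGroup V] [Module ℝ V] [Module ℂ V] [IsScalarTower ℝ ℂ V]

theorem finrank_restrictScalars_real (W : Submodule ℂ V) :
    finrank ℝ (W.restrictScalars ℝ) = 2 * finrank ℂ W := by
  have h := finrank_mul_finrank ℝ ℂ W
  rw [Complex.finrank_real_complex] at h
  exact h.symm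

variable [FiniteDimensional ℂ V]

theorem finrank_real_le_two_mul_finrank_span (U : Submodule ℝ V) :
    finrank ℝ U ≤ 2 * finrank ℂ (span ℂ (U : Set V)) := by
  have : FiniteDimensional ℝ V := FiniteDimensional.trans ℝ ℂ V
  rw [← finrank_restrictScalars_real]
  exact finrank_mono fun _ hu => subset_span hu

theorem restrictScalars_span_eq_of_two_mul_finrank_le (U : Submodule ℝ V)
    (hdim : 2 * finrank ℂ (span ℂ (U : Set V)) ≤ finrank ℝ U) :
    (span ℂ (U : Set V)).restrictScalars ℝ = U := by
  have : FiniteDimensional ℝ V := FiniteDimensional.trans ℝ ℂ V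
  have hle : U ≤ (span ℂ (U : Set V)).restrictScalars ℝ := fun _ hu => subset_span hu
  refine (eq_of_le_of_finrank_le hle ?_).symm
  rwa [finrank_restrictScalars_real]

end RealSubspace

/-- **Lagrangian real subspaces are complex.**
If `V` is a complex vector space with `dim_ℂ V = 2n`, `ω` is a nondegenerate alternating
ℂ-bilinear form on `V`, and `U` is an isotropic real subspace with `dim_ℝ U = 2n`
(i.e. `U` is Lagrangian), then `U = Span_ℂ(U) = U^⊥`; in particular `U` is a complex
subspace of `V`, i.e. it is closed under multiplication by `i`. -/
theorem stmt_5
    {V : Type*} [AddCommGroup V] [Module ℝ V] [Module ℂ V] [IsScalarTower ℝ ℂ V]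
    [FiniteDimensional ℂ V]
    (n : ℕ) (hdim : Module.finrank ℂ V = 2 * n)
    (ω : V →ₗ[ℂ] V →ₗ[ℂ] ℂ) (halt : ∀ v : V, ω v v = 0)
    (hnd : ∀ v : V, (∀ w : V, ω v w = 0) → v = 0)
    (U : Submodule ℝ V)
    (hiso : ∀ u ∈ U, ∀ u' ∈ U, ω u u' = 0)
    (hLag : Module.finrank ℝ U = 2 * n) :
    (U : Set V) = (Submodule.span ℂ (U : Set V) : Set V) ∧
    (U : Set V) = (omegaPerp ω (U : Set V) : Set V) ∧
    (∀ v ∈ U, (Complex.I : ℂ) • v ∈ U) := by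
  have hω : ω.Nondegenerate :=
    (LinearMap.IsAlt.isRefl halt).nondegenerate_iff_separatingLeft.mpr hnd
  set W := span ℂ (U : Set V)
  have hWW : W ≤ omegaPerp ω W := span_le_omegaPerp_span_of_isotropic ω hiso
  have hW_le := two_mul_finrank_le_of_le_omegaPerp hω hWW
  have hU_le : finrank ℝ U ≤ 2 * finrank ℂ W := finrank_real_le_two_mul_finrank_span U
  have hUW : (U : Set V) = W := by
    rw [← restrictScalars_span_eq_of_two_mul_finrank_le U (show 2 * finrank ℂ W ≤ _ by omega),
      coe_restrictScalars]
  have hWperp : W = omegaPerp ω W := eq_omegaPerp_of_le_of_finrank_le hω hWW (by omega)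
  refine ⟨hUW, ?_, fun v hv => ?_⟩
  · rw [← omegaPerp_span, ← hWperp, hUW]
  · rw [← SetLike.mem_coe, hUW] at hv ⊢
    exact W.smul_mem _ hv
end
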